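/- The span of the Zernike polynomials {ζ_{mn} : m ∈ ℤ, n ≥ 0} is dense in L²(D), for D the open unit disc; equivalently, {ζ_{mn}} forms an orthonormal Hilbert basis of L²(D). -/

import Mathlib

/-!
Orthonormality is a computation in polar coordinates: the angular integral of
`e^{i(m₂-m₁)θ}` vanishes unless `m₁ = m₂`, and the substitution `u = 2r² - 1` turns the radial
integral into the orthogonality relation of the Jacobi polynomials `P_n^{(0,|m|)}`.

For density, fix `m`: since `P_n^{(0,|m|)}` has degree `n`, the functions
`q(2|z|² - 1) ρ^{|m|} e^{imθ}` lie in the span for every polynomial `q`, and hence so does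
`z^a z̄^b = |z|^{2 min(a,b)} ρ^{|a-b|} e^{i(a-b)θ}`. By Stone–Weierstrass these are uniformly
dense in the continuous functions on the closed disc, which are dense in `L²(D)`.
-/

open MeasureTheory Complex Set Metric Polynomial ComplexConjugate Submodule
open scoped Real

theorem integral_exp_intCast_mul_mul_I (n : ℤ) :
    ∫ θ in -π..π, exp (n * θ * I) = if n = 0 then (2 * π : ℂ) else 0 := by
  split_ifs with hn
  · simp [hn]
    ring
  · have hc : (n * I : ℂ) ≠ 0 := mul_ne_zero (by exact_mod_cast hn) I_ne_zero
    have hperiod : exp (n * I * π) = exp (n * I * (-π : ℝ)) := by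
      rw [← mul_one (exp (n * I * (-π : ℝ))), ← exp_int_mul_two_pi_mul_I n, ← Complex.exp_add]
      congr 1; push_cast; ring
    simp_rw [mul_right_comm _ _ I]
    rw [integral_exp_mul_complex hc, hperiod, sub_self, zero_div]

theorem integral_ball_of_polarCoord_symm_eq {F : ℂ → ℂ} {R : ℝ → ℂ} {n : ℤ}
    (hF : ∀ r θ, 0 < r → r < 1 → F (Complex.polarCoord.symm (r, θ)) = R r * exp (n * θ * I)) :
    ∫ z in ball (0 : ℂ) 1, F z
      = (∫ r in (0 : ℝ)..1, r * R r) * if n = 0 then (2 * π : ℂ) else 0 := by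
  have hpolar : EqOn
      (fun p : ℝ × ℝ => p.1 • (ball (0 : ℂ) 1).indicator F (Complex.polarCoord.symm p))
      (fun p => (Ioo 0 1).indicator (fun r : ℝ => r * R r) p.1 * exp (n * p.2 * I))
      polarCoord.target := by
    rintro ⟨r, θ⟩ ⟨hr, -⟩
    have hr : 0 < r := hr
    dsimp only
    by_cases hr1 : r < 1
    · have hmem : Complex.polarCoord.symm (r, θ) ∈ ball (0 : ℂ) 1 := by
        simpa [abs_of_pos hr] using hr1
      rw [indicator_of_mem hmem, indicator_of_mem (mem_Ioo.2 ⟨hr, hr1⟩),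
        hF r θ hr hr1, real_smul, ← mul_assoc]
    · have hmem : Complex.polarCoord.symm (r, θ) ∉ ball (0 : ℂ) 1 := by
        simpa [abs_of_pos hr] using hr1
      simp only [indicator_of_notMem hmem, indicator_of_notMem (fun h : r ∈ Ioo 0 1 => hr1 h.2),
        smul_zero, zero_mul]
  rw [← integral_indicator measurableSet_ball, ← Complex.integral_comp_polarCoord_symm,
    setIntegral_congr_fun polarCoord.open_target.measurableSet hpolar, polarCoord_target,
    Measure.volume_eq_prod, setIntegral_prod_mul _ (fun θ : ℝ => exp (n * θ * I)),
    setIntegral_indicator measurableSet_Ioo,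
    inter_eq_right.2 Ioo_subset_Ioi_self, ← integral_exp_intCast_mul_mul_I,
    intervalIntegral.integral_of_le zero_le_one,
    intervalIntegral.integral_of_le (neg_le_self Real.pi_pos.le), integral_Ioc_eq_integral_Ioo,
    integral_Ioc_eq_integral_Ioo]

theorem integral_comp_two_mul_sq_sub_one_mul_pow {f : ℝ → ℝ} (hf : Continuous f) (k : ℕ) :
    ∫ r in (0 : ℝ)..1, f (2 * r ^ 2 - 1) * r ^ (2 * k + 1)
      = (2 ^ (k + 2))⁻¹ * ∫ u in (-1 : ℝ)..1, f u * (1 + u) ^ k := by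
  have hderiv : ∀ x ∈ uIcc (0 : ℝ) 1, HasDerivAt (fun r : ℝ => 2 * r ^ 2 - 1) (4 * x) x := by
    intro x _
    exact (((hasDerivAt_pow 2 x).const_mul 2).sub_const 1).congr_deriv (by norm_num; ring)
  have hsubst := intervalIntegral.integral_comp_mul_deriv hderiv (by fun_prop)
    (g := fun u => (2 ^ (k + 2))⁻¹ * (f u * (1 + u) ^ k)) (by fun_prop)
  norm_num at hsubst
  rw [← hsubst]
  refine intervalIntegral.integral_congr fun r _ => ?_
  simp only [pow_succ, pow_mul, mul_pow]
  field_simp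
  ring

theorem coe_mem_map_funLeft_of_mem_starClosure {K : Set ℂ} {S : Submodule ℂ (ℂ → ℂ)}
    (hS : ∀ a b : ℕ, (fun z : ℂ => z ^ a * conj z ^ b) ∈ S) {h : C(K, ℂ)}
    (hh : h ∈ (polynomialFunctions K).starClosure) :
    ⇑h ∈ S.map (LinearMap.funLeft ℂ ℂ ((↑) : K → ℂ)) := by
  rw [polynomialFunctions.starClosure_eq_adjoin_X, ← StarSubalgebra.mem_toSubalgebra,
    StarAlgebra.adjoin_toSubalgebra, ← Subalgebra.mem_toSubmodule, Algebra.adjoin_eq_span,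
    star_singleton, singleton_union] at hh
  refine (span_le (p := (S.map _).comap (ContinuousMap.coeFnLinearMap ℂ))).2 ?_ hh
  rintro _ hg
  obtain ⟨a, b, rfl⟩ := (Submonoid.mem_closure_pair _ _ _).1 hg
  exact ⟨_, hS a b, by ext z; simp⟩

theorem exists_mem_forall_norm_sub_le_of_monomial_mem {K : Set ℂ} (hK : IsCompact K)
    {S : Submodule ℂ (ℂ → ℂ)} (hS : ∀ a b : ℕ, (fun z : ℂ => z ^ a * conj z ^ b) ∈ S)
    (g : C(K, ℂ)) {δ : ℝ} (hδ : 0 < δ) : ∃ H ∈ S, ∀ z : K, ‖g z - H z‖ ≤ δ := by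
  have : CompactSpace K := isCompact_iff_compactSpace.mp hK
  have hg : g ∈ closure ((polynomialFunctions K).starClosure : Set C(K, ℂ)) := by
    rw [← StarSubalgebra.topologicalClosure_coe,
      polynomialFunctions.starClosure_topologicalClosure]
    trivial
  obtain ⟨h, hh, hgh⟩ := Metric.mem_closure_iff.mp hg δ hδ
  obtain ⟨H, hHS, hH⟩ := coe_mem_map_funLeft_of_mem_starClosure hS hh
  refine ⟨H, hHS, fun z => ?_⟩
  rw [← dist_eq_norm, show H z = h z from congrFun hH z]
  exact (ContinuousMap.dist_apply_le_dist z).trans hgh.le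

theorem MeasureTheory.MemLp.exists_eLpNorm_sub_lt_of_forall_ae_approx {α E : Type*}
    [TopologicalSpace α] [NormalSpace α] [MeasurableSpace α] [BorelSpace α]
    [NormedAddCommGroup E] [NormedSpace ℝ E] {μ : Measure α} [IsFiniteMeasure μ]
    [μ.WeaklyRegular] {p : ENNReal} (hp₁ : 1 ≤ p) (hp : p ≠ ⊤) {S : Set (α → E)}
    (hS : ∀ (g : BoundedContinuousFunction α E) (δ : ℝ), 0 < δ →
      ∃ H ∈ S, AEStronglyMeasurable H μ ∧ ∀ᵐ x ∂μ, ‖g x - H x‖ ≤ δ)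
    {f : α → E} (hf : MemLp f p μ) {ε : ℝ} (hε : 0 < ε) :
    ∃ H ∈ S, eLpNorm (f - H) p μ < ENNReal.ofReal ε := by
  have hε₂ := half_pos hε
  obtain ⟨g, hfg, hg⟩ :=
    hf.exists_boundedContinuous_eLpNorm_sub_le hp (ENNReal.ofReal_pos.2 hε₂).ne'
  set M := μ univ ^ p.toReal⁻¹
  have hM : M ≠ ⊤ := ENNReal.rpow_ne_top_of_nonneg (by positivity) (measure_ne_top μ _)
  obtain ⟨δ, hδ, hMδ⟩ := exists_pos_mul_lt hε₂ M.toReal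
  obtain ⟨H, hHS, hHm, hgH⟩ := hS g δ hδ
  have hgH' : eLpNorm (⇑g - H) p μ < ENNReal.ofReal (ε / 2) := calc
    _ ≤ M * ENNReal.ofReal δ := eLpNorm_le_of_ae_bound hgH
    _ = ENNReal.ofReal (M.toReal * δ) := by
      rw [ENNReal.ofReal_mul ENNReal.toReal_nonneg, ENNReal.ofReal_toReal hM]
    _ < ENNReal.ofReal (ε / 2) := (ENNReal.ofReal_lt_ofReal_iff hε₂).2 hMδ
  refine ⟨H, hHS, ?_⟩
  calc eLpNorm (f - H) p μ = eLpNorm ((f - ⇑g) + (⇑g - H)) p μ := by rw [sub_add_sub_cancel]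
    _ ≤ eLpNorm (f - ⇑g) p μ + eLpNorm (⇑g - H) p μ :=
      eLpNorm_add_le (hf.1.sub hg.1) (hg.1.sub hHm) hp₁
    _ < ENNReal.ofReal (ε / 2) + ENNReal.ofReal (ε / 2) :=
      ENNReal.add_lt_add_of_le_of_lt (hf.sub hg).eLpNorm_ne_top hfg hgH'
    _ = ENNReal.ofReal ε := by rw [← ENNReal.ofReal_add hε₂.le hε₂.le, add_halves]

noncomputable section

/-- `ρ^|m| e^{imθ}` for `z = ρ e^{iθ}`. -/
def zernikeAngular (m : ℤ) (z : ℂ) : ℂ :=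
  if 0 ≤ m then z ^ m.natAbs else conj z ^ m.natAbs

def zernike (P : ℕ → ℕ → ℝ → ℝ) (p : ℤ × ℕ) (z : ℂ) : ℂ :=
  (√(1 + p.1.natAbs + 2 * p.2) : ℂ) * (P p.2 p.1.natAbs (2 * ‖z‖ ^ 2 - 1) : ℂ) *
    zernikeAngular p.1 z

def zernikeRadial (P : ℕ → ℕ → ℝ → ℝ) (m : ℤ) (n : ℕ) (r : ℝ) : ℝ :=
  √(1 + m.natAbs + 2 * n) * P n m.natAbs (2 * r ^ 2 - 1) * r ^ m.natAbs

end

theorem zernikeAngular_polarCoord_symm (m : ℤ) (r θ : ℝ) :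
    zernikeAngular m (Complex.polarCoord.symm (r, θ)) = r ^ m.natAbs * exp (m * θ * I) := by
  have hz : Complex.polarCoord.symm (r, θ) = r * exp (θ * I) := by
    simp [exp_mul_I]
  rw [zernikeAngular, hz]
  split_ifs with hm
  · have hk : (m.natAbs : ℂ) = m := by
      rw [← Int.cast_natCast, Int.natCast_natAbs, abs_of_nonneg hm]
    rw [mul_pow, ← Complex.exp_nat_mul, hk]
    ring_nf
  · have hk : (m.natAbs : ℂ) = -m := by
      rw [← Int.cast_natCast, Int.natCast_natAbs, abs_of_neg (not_le.mp hm), Int.cast_neg]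
    rw [map_mul, conj_ofReal, ← exp_conj, map_mul, conj_ofReal, conj_I, mul_pow,
      ← Complex.exp_nat_mul, hk]
    ring_nf

theorem zernike_polarCoord_symm (P : ℕ → ℕ → ℝ → ℝ) (m : ℤ) (n : ℕ) {r : ℝ} (hr : 0 ≤ r)
    (θ : ℝ) :
    zernike P (m, n) (Complex.polarCoord.symm (r, θ))
      = zernikeRadial P m n r * exp (m * θ * I) := by
  rw [zernike, zernikeAngular_polarCoord_symm, norm_polarCoord_symm, abs_of_nonneg hr,
    zernikeRadial]
  push_cast
  ring

theorem integral_mul_zernikeRadial_mul_zernikeRadial {P : ℕ → ℕ → ℝ → ℝ}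
    (hPcont : ∀ n k, Continuous (P n k))
    (hPorth : ∀ (k n₁ n₂ : ℕ), (∫ ξ in (-1 : ℝ)..1, P n₁ k ξ * P n₂ k ξ * (1 + ξ) ^ k)
      = if n₁ = n₂ then 2 ^ (k + 1) / (1 + (k : ℝ) + 2 * n₁) else 0)
    (m : ℤ) (n₁ n₂ : ℕ) :
    ∫ r in (0 : ℝ)..1, r * (zernikeRadial P m n₁ r * zernikeRadial P m n₂ r)
      = if n₁ = n₂ then 1 / 2 else 0 := by
  set k := m.natAbs
  calc ∫ r in (0 : ℝ)..1, r * (zernikeRadial P m n₁ r * zernikeRadial P m n₂ r)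
      = √(1 + k + 2 * n₁) * √(1 + k + 2 * n₂) *
          ∫ r in (0 : ℝ)..1, (P n₁ k * P n₂ k) (2 * r ^ 2 - 1) * r ^ (2 * k + 1) := by
        rw [← intervalIntegral.integral_const_mul]
        congr 1 with r
        simp only [zernikeRadial, Pi.mul_apply]
        ring
    _ = if n₁ = n₂ then 1 / 2 else 0 := by
        rw [integral_comp_two_mul_sq_sub_one_mul_pow ((hPcont n₁ k).mul (hPcont n₂ k))]
        simp only [Pi.mul_apply]
        rw [hPorth]
        split_ifs with hn
        · subst hn
          rw [Real.mul_self_sqrt (by positivity)]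
          field_simp
          ring
        · simp

theorem zernike_orthonormal {P : ℕ → ℕ → ℝ → ℝ}
    (hPcont : ∀ n k, Continuous (P n k))
    (hPorth : ∀ (k n₁ n₂ : ℕ), (∫ ξ in (-1 : ℝ)..1, P n₁ k ξ * P n₂ k ξ * (1 + ξ) ^ k)
      = if n₁ = n₂ then 2 ^ (k + 1) / (1 + (k : ℝ) + 2 * n₁) else 0)
    (p q : ℤ × ℕ) :
    (1 / (π : ℂ)) * ∫ z in ball (0 : ℂ) 1, conj (zernike P p z) * zernike P q z
      = if p = q then 1 else 0 := by
  obtain ⟨m₁, n₁⟩ := p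
  obtain ⟨m₂, n₂⟩ := q
  have hpolar (r θ : ℝ) (hr : 0 < r) :
      conj (zernike P (m₁, n₁) (Complex.polarCoord.symm (r, θ)))
          * zernike P (m₂, n₂) (Complex.polarCoord.symm (r, θ))
        = (zernikeRadial P m₁ n₁ r * zernikeRadial P m₂ n₂ r : ℝ)
          * exp (((m₂ - m₁ : ℤ) : ℂ) * θ * I) := by
    rw [zernike_polarCoord_symm P _ _ hr.le, zernike_polarCoord_symm P _ _ hr.le, map_mul,
      conj_ofReal, ← exp_conj, mul_mul_mul_comm, ← Complex.exp_add]
    simp only [map_mul, conj_ofReal, conj_I, map_intCast]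
    push_cast
    ring_nf
  rw [integral_ball_of_polarCoord_symm_eq fun r θ hr _ => hpolar r θ hr]
  simp_rw [← ofReal_mul, intervalIntegral.integral_ofReal]
  rcases eq_or_ne m₁ m₂ with rfl | hm
  · rw [integral_mul_zernikeRadial_mul_zernikeRadial hPcont hPorth]
    simp only [sub_self, if_true, Prod.mk.injEq, true_and]
    split_ifs <;> field_simp <;> simp
  · simp [sub_eq_zero, hm.symm, hm]

theorem continuous_zernike {P : ℕ → ℕ → ℝ → ℝ} (hPcont : ∀ n k, Continuous (P n k))
    (p : ℤ × ℕ) : Continuous (zernike P p) := by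
  have := hPcont p.2 p.1.natAbs
  unfold zernike zernikeAngular
  split_ifs <;> fun_prop

theorem ofReal_eval_mul_zernikeAngular_mem_span_zernike {P : ℕ → ℕ → ℝ → ℝ}
    (hPdeg : ∀ n k : ℕ, ∃ p : ℝ[X], p.degree = n ∧ ∀ x, P n k x = p.eval x) (m : ℤ) (q : ℝ[X]) :
    (fun z => ((q.eval (2 * ‖z‖ ^ 2 - 1) : ℝ) : ℂ) * zernikeAngular m z)
      ∈ span ℂ (range (zernike P)) := by
  choose S hSdeg hSeval using fun n => hPdeg n m.natAbs
  let seq : Polynomial.Sequence ℝ := ⟨S, hSdeg⟩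
  let L : ℝ[X] →ₗ[ℝ] ℂ → ℂ :=
    { toFun q z := ((q.eval (2 * ‖z‖ ^ 2 - 1) : ℝ) : ℂ) * zernikeAngular m z
      map_add' q r := by ext z; simp [add_mul]
      map_smul' c q := by ext z; simp [mul_assoc] }
  have hL (n : ℕ) : L (seq n) ∈ (span ℂ (range (zernike P))).restrictScalars ℝ := by
    have hμ : (√(1 + m.natAbs + 2 * n) : ℂ) ≠ 0 := by
      exact_mod_cast (Real.sqrt_pos.2 (by positivity)).ne'
    have hζ : zernike P (m, n) = (√(1 + m.natAbs + 2 * n) : ℂ) • L (seq n) := by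
      ext z
      simp [L, seq, zernike, hSeval, mul_assoc]
    rw [restrictScalars_mem, ← inv_smul_smul₀ hμ (L (seq n)), ← hζ]
    exact smul_mem _ _ (subset_span ⟨(m, n), rfl⟩)
  have hspan : span ℝ (range seq) = ⊤ :=
    seq.span fun n => (leadingCoeff_ne_zero.2 (seq.ne_zero n)).isUnit
  have hle : span ℝ (range seq) ≤ ((span ℂ (range (zernike P))).restrictScalars ℝ).comap L :=
    span_le.2 (range_subset_iff.2 hL)
  exact hle (hspan ▸ mem_top)

theorem monomial_mem_span_zernike {P : ℕ → ℕ → ℝ → ℝ}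
    (hPdeg : ∀ n k : ℕ, ∃ p : ℝ[X], p.degree = n ∧ ∀ x, P n k x = p.eval x) (a b : ℕ) :
    (fun z : ℂ => z ^ a * conj z ^ b) ∈ span ℂ (range (zernike P)) := by
  convert ofReal_eval_mul_zernikeAngular_mem_span_zernike hPdeg ((a : ℤ) - b)
    ((C (1 / 2) * (X + 1)) ^ min a b) using 1
  funext z
  have hnorm : ((1 / 2 * (2 * ‖z‖ ^ 2 - 1 + 1) : ℝ) : ℂ) = z * conj z := by
    rw [mul_conj, normSq_eq_norm_sq]
    push_cast
    ring
  simp only [eval_pow, eval_mul, eval_C, eval_add, eval_X, eval_one, ofReal_pow, hnorm,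
    zernikeAngular]
  rcases le_total b a with h | h
  · obtain ⟨d, rfl⟩ := Nat.exists_eq_add_of_le h
    simp [pow_add]
    ring
  · obtain ⟨d, rfl⟩ := Nat.exists_eq_add_of_le h
    rcases d.eq_zero_or_pos with rfl | hd
    · simp [mul_pow]
    · simp [pow_add, hd.ne']
      ring

/-- The Zernike polynomials form an orthonormal family whose span is
dense in L²(D), D the open unit disc; i.e. they form an orthonormal Hilbert basis
of L²(D). The Zernike polynomial ζ_{mn}(z) = μ_{mn} P_n^{(0,|m|)}(2|z|²−1) ρ^{|m|} e^{imθ}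
is expressed on D ⊂ ℂ using ρ^{|m|} e^{imθ} = z^m (m ≥ 0) or conj(z)^{|m|} (m < 0). -/
theorem zernike_dense_in_L2
    (P : ℕ → ℕ → ℝ → ℝ)
    (hPpoly : ∀ (n k : ℕ), ∃ p : Polynomial ℝ, p.degree = n ∧ ∀ x, P n k x = p.eval x)
    (hPorth : ∀ (k n₁ n₂ : ℕ),
      (∫ ξ in (-1:ℝ)..1, P n₁ k ξ * P n₂ k ξ * (1 + ξ) ^ k)
        = if n₁ = n₂ then 2 ^ (k+1) / (1 + (k:ℝ) + 2 * n₁) else 0)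
    (ζ : ℤ × ℕ → ℂ → ℂ)
    (hζ : ∀ (m : ℤ) (n : ℕ) (z : ℂ), ζ (m, n) z =
      (Real.sqrt (1 + m.natAbs + 2 * n) : ℂ) * (P n m.natAbs (2 * ‖z‖ ^ 2 - 1) : ℂ)
        * (if 0 ≤ m then z ^ m.natAbs else (starRingEnd ℂ z) ^ m.natAbs)) :
    -- orthonormality with respect to ⟨v,w⟩ = (1/π) ∫_D conj v · w dA
    (∀ p q : ℤ × ℕ,
      (1 / (Real.pi : ℂ)) * ∫ z in Metric.ball (0:ℂ) 1, (starRingEnd ℂ) (ζ p z) * ζ q z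
        = if p = q then 1 else 0) ∧
    -- density of the span in L²(D)
    (∀ f : Lp ℂ 2 (volume.restrict (Metric.ball (0:ℂ) 1)), ∀ ε : ℝ, 0 < ε →
      ∃ c : (ℤ × ℕ) →₀ ℂ,
        eLpNorm ((f : ℂ → ℂ) - fun z => ∑ p ∈ c.support, c p • ζ p z) 2
            (volume.restrict (Metric.ball (0:ℂ) 1)) < ENNReal.ofReal ε) := by
  obtain rfl : ζ = zernike P := funext fun p => funext (hζ p.1 p.2)
  have hPcont (n k : ℕ) : Continuous (P n k) := by
    obtain ⟨q, -, hq⟩ := hPpoly n k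
    exact funext hq ▸ q.continuous
  refine ⟨zernike_orthonormal hPcont hPorth, fun f ε hε => ?_⟩
  have : IsFiniteMeasure (volume.restrict (ball (0 : ℂ) 1)) :=
    isFiniteMeasure_restrict.2 measure_ball_lt_top.ne
  set S := range fun c : (ℤ × ℕ) →₀ ℂ => fun z => ∑ p ∈ c.support, c p • zernike P p z
  have happrox (g : BoundedContinuousFunction ℂ ℂ) (δ : ℝ) (hδ : 0 < δ) :
      ∃ H ∈ S, AEStronglyMeasurable H (volume.restrict (ball 0 1)) ∧
        ∀ᵐ z ∂volume.restrict (ball 0 1), ‖g z - H z‖ ≤ δ := by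
    obtain ⟨H, hH, hgH⟩ := exists_mem_forall_norm_sub_le_of_monomial_mem
      (isCompact_closedBall 0 1) (monomial_mem_span_zernike hPpoly)
      (g.toContinuousMap.restrict (closedBall 0 1)) hδ
    obtain ⟨c, rfl⟩ := Finsupp.mem_span_range_iff_exists_finsupp.1 hH
    refine ⟨_, ⟨c, rfl⟩, ?_, ae_restrict_of_forall_mem measurableSet_ball fun z hz => ?_⟩
    · exact (continuous_finsetSum _ fun p _ =>
        (continuous_zernike hPcont p).const_smul (c p)).aestronglyMeasurable
    · simpa [Finsupp.sum] using hgH ⟨z, ball_subset_closedBall hz⟩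
  obtain ⟨_, ⟨c, rfl⟩, hc⟩ := (Lp.memLp f).exists_eLpNorm_sub_lt_of_forall_ae_approx
    one_le_two ENNReal.ofNat_ne_top happrox hε
  exact ⟨c, hc⟩
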